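/- For every λ ∈ ℂ, the derivative of f satisfies f'(λ) = −iλ + 4πλ·e^{2iα}·Ai'(e^{-iα}λ)·Ai(e^{iα}λ). In particular, if Ai'(e^{-iα}λ) = 0 then f'(λ) = −iλ. -/

import Mathlib

/-!
Since `Ai'' = z Ai` and `ω = e^{iα}` is a cube root of unity, `λ ↦ Ai(ω²λ)` and `λ ↦ Ai(ωλ)`
both solve `y'' = λ y`, so their Wronskian is constant. Its value at `0` is
`Ai(0) Ai'(0) (ω - ω²) = -i/(2π)`, by the reflection formula `Γ(1/3) Γ(2/3) = 2π/√3`.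
Differentiating `f` with `Ai'' = z Ai` and `ω⁴ = ω` gives `2πλ` times this Wronskian plus
`4πλω² Ai'(ω²λ) Ai(ωλ)`, and `e^{-iα} = e^{2iα} = ω²`.
-/

noncomputable section

/-- The Airy function, defined by its entire power series. -/
def Ai (z : ℂ) : ℂ :=
  (((3 : ℝ) ^ (-(2:ℝ)/3) / Real.Gamma (2/3) : ℝ) : ℂ) *
    ∑' k : ℕ, (∏ j ∈ Finset.range k, ((3*j+1 : ℕ) : ℂ)) * z ^ (3*k) / ((3*k).factorial : ℂ)
  + ((-((3 : ℝ) ^ (-(1:ℝ)/3)) / Real.Gamma (1/3) : ℝ) : ℂ) *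
    ∑' k : ℕ, (∏ j ∈ Finset.range k, ((3*j+2 : ℕ) : ℂ)) * z ^ (3*k+1) / ((3*k+1).factorial : ℂ)

/-- The derivative of the Airy function. -/
def Ai' (z : ℂ) : ℂ := deriv Ai z

/-- The angle α = 2π/3. -/
def α : ℝ := 2 * Real.pi / 3

/-- f(λ) = 2π Ai'(e^{-iα}λ) Ai'(e^{iα}λ). -/
def f (lam : ℂ) : ℂ :=
  2 * Real.pi * Ai' (Complex.exp (-(α:ℂ) * Complex.I) * lam) *
    Ai' (Complex.exp ((α:ℂ) * Complex.I) * lam)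

open Finset Nat
open scoped Real

section LacunarySeries

variable {c : ℕ → ℂ} {e : ℕ → ℕ}

lemma natCast_mul_pow_pred_le (n : ℕ) {x R : ℝ} (hx : 0 ≤ x) (hxR : x ≤ R) (hR : 1 ≤ R) :
    n * x ^ (n - 1) ≤ (2 * R) ^ n := by
  have hn : (n : ℝ) ≤ 2 ^ n := by exact_mod_cast Nat.lt_two_pow_self.le
  calc n * x ^ (n - 1) ≤ 2 ^ n * R ^ n := by
        gcongr
        exact (pow_le_pow_left₀ hx hxR _).trans (pow_le_pow_right₀ hR (Nat.sub_le n 1))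
    _ = (2 * R) ^ n := (mul_pow 2 R n).symm

lemma norm_mul_natCast_mul_pow_pred_le (a : ℂ) (n : ℕ) {y : ℂ} {R : ℝ} (hyR : ‖y‖ ≤ R)
    (hR : 1 ≤ R) : ‖a * n * y ^ (n - 1)‖ ≤ ‖a * ((2 * R : ℝ) : ℂ) ^ n‖ := by
  have h2R : (0 : ℝ) ≤ 2 * R := by linarith
  rw [norm_mul, norm_mul, norm_mul, norm_pow, norm_pow, Complex.norm_natCast, Complex.norm_real,
    Real.norm_of_nonneg h2R, mul_assoc]
  gcongr
  exact natCast_mul_pow_pred_le n (norm_nonneg y) hyR hR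

lemma summable_norm_mul_natCast_mul_pow_pred (hc : ∀ z : ℂ, Summable fun k => ‖c k * z ^ e k‖)
    (z : ℂ) : Summable fun k => ‖c k * e k * z ^ (e k - 1)‖ :=
  (hc _).of_nonneg_of_le (fun _ => norm_nonneg _) fun k =>
    norm_mul_natCast_mul_pow_pred_le (c k) (e k) (le_add_of_nonneg_right zero_le_one)
      (le_add_of_nonneg_left (norm_nonneg z))

theorem hasDerivAt_tsum_mul_pow (hc : ∀ z : ℂ, Summable fun k => ‖c k * z ^ e k‖) (z : ℂ) :
    HasDerivAt (fun w => ∑' k, c k * w ^ e k) (∑' k, c k * e k * z ^ (e k - 1)) z := by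
  have hR : 1 ≤ ‖z‖ + 1 := le_add_of_nonneg_left (norm_nonneg z)
  have hz : z ∈ Metric.ball (0 : ℂ) (‖z‖ + 1) := by simp
  refine hasDerivAt_tsum_of_isPreconnected (g := fun k w => c k * w ^ e k)
    (g' := fun k y => c k * e k * y ^ (e k - 1)) (hc ((2 * (‖z‖ + 1) : ℝ) : ℂ))
    Metric.isOpen_ball (convex_ball 0 _).isPreconnected (fun k y _ => ?_) (fun k y hy => ?_) hz
    (hc z).of_norm hz
  · simpa only [mul_assoc] using (hasDerivAt_pow (e k) y).const_mul (c k)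
  · exact norm_mul_natCast_mul_pow_pred_le (c k) (e k) (mem_ball_zero_iff.mp hy).le hR

end LacunarySeries

def airyCoeff (r k : ℕ) : ℂ := (∏ j ∈ range k, ((3 * j + r + 1 : ℕ) : ℂ)) / (3 * k + r)!

lemma prod_mul_factorial_le_factorial (r k : ℕ) :
    (∏ j ∈ range k, (3 * j + r + 1)) * k ! ≤ (3 * k + r)! := by
  induction k with
  | zero => simpa [Nat.one_le_iff_ne_zero] using factorial_ne_zero r
  | succ k ih =>
    have hk : k + 1 ≤ (3 * k + r + 2) * (3 * k + r + 3) := by nlinarith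
    calc (∏ j ∈ range (k + 1), (3 * j + r + 1)) * (k + 1)!
        = (∏ j ∈ range k, (3 * j + r + 1)) * k ! * ((3 * k + r + 1) * (k + 1)) := by
          rw [prod_range_succ, factorial_succ]; ring
      _ ≤ (3 * k + r)! * ((3 * k + r + 1) * ((3 * k + r + 2) * (3 * k + r + 3))) := by gcongr
      _ = (3 * (k + 1) + r)! := by
          rw [show 3 * (k + 1) + r = 3 * k + r + 1 + 1 + 1 by ring, factorial_succ,
            factorial_succ, factorial_succ]
          ring

lemma norm_airyCoeff_le (r k : ℕ) : ‖airyCoeff r k‖ ≤ 1 / k ! := by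
  rw [airyCoeff, norm_div, ← Nat.cast_prod, Complex.norm_natCast, Complex.norm_natCast,
    div_le_div_iff₀ (by positivity) (by positivity), one_mul]
  exact_mod_cast prod_mul_factorial_le_factorial r k

lemma airyCoeff_succ_mul (r k : ℕ) :
    airyCoeff r (k + 1) * ((3 * k + r + 3) * (3 * k + r + 2)) = airyCoeff r k := by
  have hfac : (3 * (k + 1) + r)! =
      (3 * k + r + 3) * (3 * k + r + 2) * (3 * k + r + 1) * (3 * k + r)! := by
    rw [show 3 * (k + 1) + r = 3 * k + r + 2 + 1 by ring, factorial_succ, factorial_succ,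
      factorial_succ]
    ring
  have hF : ((3 * k + r)! : ℂ) ≠ 0 := by exact_mod_cast factorial_ne_zero _
  have h1 : (3 * k + r + 1 : ℂ) ≠ 0 := by exact_mod_cast succ_ne_zero (3 * k + r)
  have h2 : (3 * k + r + 2 : ℂ) ≠ 0 := by exact_mod_cast succ_ne_zero (3 * k + r + 1)
  have h3 : (3 * k + r + 3 : ℂ) ≠ 0 := by exact_mod_cast succ_ne_zero (3 * k + r + 2)
  rw [airyCoeff, airyCoeff, prod_range_succ, hfac]
  push_cast
  field_simp

lemma summable_norm_airyCoeff_mul_pow (r : ℕ) (z : ℂ) :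
    Summable fun k => ‖airyCoeff r k * z ^ (3 * k + r)‖ := by
  refine ((Real.summable_pow_div_factorial (‖z‖ ^ 3)).mul_left (‖z‖ ^ r)).of_nonneg_of_le
    (fun _ => norm_nonneg _) fun k => ?_
  calc ‖airyCoeff r k * z ^ (3 * k + r)‖ ≤ 1 / k ! * ‖z‖ ^ (3 * k + r) := by
        rw [norm_mul, norm_pow]; gcongr; exact norm_airyCoeff_le r k
    _ = ‖z‖ ^ r * ((‖z‖ ^ 3) ^ k / k !) := by ring

def airySeries (r : ℕ) (z : ℂ) : ℂ := ∑' k, airyCoeff r k * z ^ (3 * k + r)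

def airySeriesDeriv (r : ℕ) (z : ℂ) : ℂ :=
  ∑' k, airyCoeff r k * ↑(3 * k + r) * z ^ (3 * k + r - 1)

lemma hasDerivAt_airySeries (r : ℕ) (z : ℂ) :
    HasDerivAt (airySeries r) (airySeriesDeriv r z) z :=
  hasDerivAt_tsum_mul_pow (e := fun k => 3 * k + r) (summable_norm_airyCoeff_mul_pow r) z

lemma hasDerivAt_airySeriesDeriv {r : ℕ} (hr : r ≤ 1) (z : ℂ) :
    HasDerivAt (airySeriesDeriv r) (z * airySeries r z) z := by
  have hc := summable_norm_mul_natCast_mul_pow_pred (e := fun k => 3 * k + r)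
    (summable_norm_airyCoeff_mul_pow r)
  refine (hasDerivAt_tsum_mul_pow hc z).congr_deriv ?_
  rw [airySeries, ← tsum_mul_left,
    (summable_norm_mul_natCast_mul_pow_pred hc z).of_norm.tsum_eq_zero_add]
  -- the constant term `r (r - 1) z ^ (r - 2)` of the second derivative vanishes only for `r ≤ 1`
  have h0 : airyCoeff r 0 * ↑(3 * 0 + r) * ↑(3 * 0 + r - 1) * z ^ (3 * 0 + r - 1 - 1) = 0 := by
    interval_cases r <;> simp
  rw [h0, zero_add]
  refine tsum_congr fun k => ?_
  rw [show 3 * (k + 1) + r - 1 - 1 = 3 * k + r + 1 by omega,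
    show 3 * (k + 1) + r - 1 = 3 * k + r + 2 by omega, ← airyCoeff_succ_mul r k]
  push_cast
  ring

def Ai₀ : ℝ := 3 ^ (-(2:ℝ)/3) / Real.Gamma (2/3)

def Ai'₀ : ℝ := -(3 ^ (-(1:ℝ)/3)) / Real.Gamma (1/3)

lemma Ai_eq_airySeries (z : ℂ) : Ai z = Ai₀ * airySeries 0 z + Ai'₀ * airySeries 1 z := by
  simp only [Ai, Ai₀, Ai'₀, airySeries, airyCoeff, add_zero, div_mul_eq_mul_div]

lemma hasDerivAt_Ai (z : ℂ) :
    HasDerivAt Ai (Ai₀ * airySeriesDeriv 0 z + Ai'₀ * airySeriesDeriv 1 z) z := by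
  rw [show Ai = fun w => Ai₀ * airySeries 0 w + Ai'₀ * airySeries 1 w from
    funext Ai_eq_airySeries]
  exact ((hasDerivAt_airySeries 0 z).const_mul _).add ((hasDerivAt_airySeries 1 z).const_mul _)

lemma Ai'_eq_airySeriesDeriv (z : ℂ) :
    Ai' z = Ai₀ * airySeriesDeriv 0 z + Ai'₀ * airySeriesDeriv 1 z :=
  (hasDerivAt_Ai z).deriv

lemma hasDerivAt_Ai' (z : ℂ) : HasDerivAt Ai' (z * Ai z) z := by
  rw [show Ai' = fun w => Ai₀ * airySeriesDeriv 0 w + Ai'₀ * airySeriesDeriv 1 w from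
    funext Ai'_eq_airySeriesDeriv, Ai_eq_airySeries]
  exact (((hasDerivAt_airySeriesDeriv zero_le_one z).const_mul _).add
    ((hasDerivAt_airySeriesDeriv le_rfl z).const_mul _)).congr_deriv (by ring)

lemma Ai_zero : Ai 0 = Ai₀ := by
  have h0 : airySeries 0 0 = 1 := by
    rw [airySeries, tsum_eq_single 0 fun k hk => by simp [hk]]; simp [airyCoeff]
  have h1 : airySeries 1 0 = 0 := by simp [airySeries]
  simp [Ai_eq_airySeries, h0, h1]

lemma Ai'_zero : Ai' 0 = Ai'₀ := by
  have h0 : airySeriesDeriv 0 0 = 0 := by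
    rw [airySeriesDeriv, tsum_eq_single 0 fun k hk => by simp [show 3 * k - 1 ≠ 0 by omega]]
    simp
  have h1 : airySeriesDeriv 1 0 = 1 := by
    rw [airySeriesDeriv, tsum_eq_single 0 fun k hk => by simp [hk]]; simp [airyCoeff]
  simp [Ai'_eq_airySeriesDeriv, h0, h1]

lemma hasDerivAt_Ai_const_mul (a z : ℂ) :
    HasDerivAt (fun w => Ai (a * w)) (a * Ai' (a * z)) z := by
  have := (hasDerivAt_Ai (a * z)).comp z ((hasDerivAt_id z).const_mul a)
  rw [← Ai'_eq_airySeriesDeriv] at this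
  exact this.congr_deriv (by simp [mul_comm])

lemma hasDerivAt_Ai'_const_mul (a z : ℂ) :
    HasDerivAt (fun w => Ai' (a * w)) (a ^ 2 * z * Ai (a * z)) z :=
  ((hasDerivAt_Ai' (a * z)).comp z ((hasDerivAt_id z).const_mul a)).congr_deriv (by simp; ring)

theorem Ai_wronskian {a b : ℂ} (hab : a ^ 3 = b ^ 3) (z : ℂ) :
    Ai (a * z) * (b * Ai' (b * z)) - a * Ai' (a * z) * Ai (b * z) = Ai₀ * Ai'₀ * (b - a) := by
  set W : ℂ → ℂ := fun w => Ai (a * w) * (b * Ai' (b * w)) - a * Ai' (a * w) * Ai (b * w)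
  have hW : ∀ w, HasDerivAt W 0 w := fun w =>
    (((hasDerivAt_Ai_const_mul a w).mul ((hasDerivAt_Ai'_const_mul b w).const_mul b)).sub
      (((hasDerivAt_Ai'_const_mul a w).const_mul a).mul (hasDerivAt_Ai_const_mul b w))).congr_deriv
      (by linear_combination (-w * Ai (a * w) * Ai (b * w)) * hab)
  have hconst := is_const_of_deriv_eq_zero (fun w => (hW w).differentiableAt)
    (fun w => (hW w).deriv) z 0
  simp only [W, mul_zero, Ai_zero, Ai'_zero] at hconst
  rw [hconst]
  ring

lemma Gamma_one_third_mul_Gamma_two_thirds :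
    Real.Gamma (1/3) * Real.Gamma (2/3) = 2 * π / √3 := by
  rw [show (2/3 : ℝ) = 1 - 1/3 by norm_num, Real.Gamma_mul_Gamma_one_sub,
    show π * (1/3) = π / 3 by ring, Real.sin_pi_div_three]
  field_simp

lemma Ai₀_mul_Ai'₀ : Ai₀ * Ai'₀ * (2 * π * √3) = -1 := by
  have h3 : (3 : ℝ) ^ (-(2:ℝ)/3) * 3 ^ (-(1:ℝ)/3) = 1 / 3 := by
    rw [← Real.rpow_add (by norm_num), show -(2:ℝ)/3 + -(1:ℝ)/3 = -1 by ring, Real.rpow_neg_one,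
      one_div]
  have hs : √3 * √3 = 3 := Real.mul_self_sqrt (by norm_num)
  calc Ai₀ * Ai'₀ * (2 * π * √3)
      = -((3 : ℝ) ^ (-(2:ℝ)/3) * 3 ^ (-(1:ℝ)/3)) / (Real.Gamma (1/3) * Real.Gamma (2/3)) *
          (2 * π * √3) := by
        rw [Ai₀, Ai'₀]; ring
    _ = -1 := by
        rw [h3, Gamma_one_third_mul_Gamma_two_thirds]
        field_simp
        linear_combination -hs

def ω : ℂ := Complex.exp (α * Complex.I)

lemma ω_pow_three : ω ^ 3 = 1 := by
  rw [ω, ← Complex.exp_nat_mul, ← Complex.exp_two_pi_mul_I, α]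
  push_cast
  ring_nf

lemma exp_two_α_mul_I : Complex.exp (2 * α * Complex.I) = ω ^ 2 := by
  rw [ω, ← Complex.exp_nat_mul]
  push_cast
  ring_nf

lemma exp_neg_α_mul_I : Complex.exp (-α * Complex.I) = ω ^ 2 := by
  rw [← mul_one (Complex.exp _), ← ω_pow_three, ω, ← Complex.exp_nat_mul, ← Complex.exp_nat_mul,
    ← Complex.exp_add]
  push_cast
  ring_nf

lemma ω_sub_ω_sq : ω - ω ^ 2 = √3 * Complex.I := by
  have hcos : Real.cos α = -1 / 2 := by
    rw [α, show 2 * π / 3 = π - π / 3 by ring, Real.cos_pi_sub, Real.cos_pi_div_three]; norm_num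
  have hsin : Real.sin α = √3 / 2 := by
    rw [α, show 2 * π / 3 = π - π / 3 by ring, Real.sin_pi_sub, Real.sin_pi_div_three]
  have hω : ω = -1 / 2 + √3 / 2 * Complex.I := by
    rw [ω, Complex.exp_mul_I, ← Complex.ofReal_cos, ← Complex.ofReal_sin, hcos, hsin]
    push_cast
    ring
  have hs : (√3 : ℂ) ^ 2 = 3 := by exact_mod_cast Real.sq_sqrt (by norm_num : (0 : ℝ) ≤ 3)
  rw [hω]
  linear_combination (-(1 / 4) * Complex.I ^ 2) * hs - 3 / 4 * Complex.I_sq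

lemma f_eq : f = fun z => 2 * π * Ai' (ω ^ 2 * z) * Ai' (ω * z) := by
  ext z
  rw [f, exp_neg_α_mul_I, ω]

/-- For every `λ ∈ ℂ`, `f'(λ) = −iλ + 4πλ e^{2iα} Ai'(e^{-iα}λ) Ai(e^{iα}λ)`;
in particular, if `Ai'(e^{-iα}λ) = 0` then `f'(λ) = −iλ`. -/
theorem deriv_f (lam : ℂ) :
    deriv f lam = -Complex.I * lam + 4 * Real.pi * lam * Complex.exp (2 * (α:ℂ) * Complex.I) *
        Ai' (Complex.exp (-(α:ℂ) * Complex.I) * lam) * Ai (Complex.exp ((α:ℂ) * Complex.I) * lam)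
    ∧ (Ai' (Complex.exp (-(α:ℂ) * Complex.I) * lam) = 0 → deriv f lam = -Complex.I * lam) := by
  rw [exp_two_α_mul_I, exp_neg_α_mul_I, ← ω]
  have hf : HasDerivAt f (2 * π * ((ω ^ 2) ^ 2 * lam * Ai (ω ^ 2 * lam)) * Ai' (ω * lam) +
      2 * π * Ai' (ω ^ 2 * lam) * (ω ^ 2 * lam * Ai (ω * lam))) lam := by
    rw [f_eq]
    exact ((hasDerivAt_Ai'_const_mul _ lam).const_mul _).mul (hasDerivAt_Ai'_const_mul _ lam)
  have hW := Ai_wronskian (a := ω ^ 2) (b := ω) (by linear_combination ω ^ 3 * ω_pow_three) lam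
  have hc : (Ai₀ : ℂ) * Ai'₀ * (2 * π * √3) = -1 := by exact_mod_cast Ai₀_mul_Ai'₀
  have hderiv :
      deriv f lam = -Complex.I * lam + 4 * π * lam * ω ^ 2 * Ai' (ω ^ 2 * lam) * Ai (ω * lam) := by
    rw [hf.deriv]
    rw [ω_sub_ω_sq] at hW
    linear_combination (2 * π * lam) * hW + (Complex.I * lam) * hc +
      (2 * π * lam * ω * Ai (ω ^ 2 * lam) * Ai' (ω * lam)) * ω_pow_three
  exact ⟨hderiv, fun h => by rw [hderiv, h]; ring⟩

end
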